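/- Let X be a compact metric space, T : X → X continuous, Λ ⊆ M(X,T) nonempty compact, A ∈ C(X, GL_d(ℝ)), and (A_k) a sequence in C(X, GL_d(ℝ)) with ρ(A_k, A) → 0 and β^Λ(A_k) → β^Λ(A). If μ_k ∈ M^Λ_max(A_k) for each k and μ is a weak-* limit point of (μ_k), then μ ∈ M^Λ_max(A). -/

import Mathlib

open MeasureTheory Topology Filter Set

noncomputable section

/-- Operator space of d×d real matrices, realized as continuous linear endomorphisms
of Euclidean space with the operator norm. -/
abbrev Md (d : ℕ) := EuclideanSpace ℝ (Fin d) →L[ℝ] EuclideanSpace ℝ (Fin d)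

/-- The space `C(X, GL_d(ℝ))` of continuous `GL_d(ℝ)`-valued maps, encoded as pairs
`(A, A⁻¹)` of continuous matrix-valued maps that are pointwise mutually inverse.
The metric (inherited from the product of sup metrics) induces the same topology as
`ρ(A,B) = max_x (‖A x - B x‖ + ‖A x⁻¹ - B x⁻¹‖)`. -/
def GLC (X : Type*) [TopologicalSpace X] (d : ℕ) : Type _ :=
  {p : C(X, Md d) × C(X, Md d) // ∀ x, p.1 x * p.2 x = 1 ∧ p.2 x * p.1 x = 1}

instance (X : Type*) [TopologicalSpace X] [CompactSpace X] (d : ℕ) :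
    MetricSpace (GLC X d) := by
  delta GLC; infer_instance

/-- The metric ρ of the paper. -/
def rho {X : Type*} [TopologicalSpace X] [CompactSpace X] {d : ℕ} (A B : GLC X d) : ℝ :=
  ⨆ x : X, (‖A.1.1 x - B.1.1 x‖ + ‖A.1.2 x - B.1.2 x‖)

/-- The cocycle `A(n,x) = A(T^{n-1} x) ⋯ A(x)`. -/
def coc {X : Type*} [TopologicalSpace X] {d : ℕ} (T : X → X) (A : GLC X d) :
    ℕ → X → Md d
  | 0, _ => 1
  | n + 1, x => coc T A n (T x) * A.1.1 x

/-- The average `(1/n) ∫ log ‖A(n,x)‖ dμ`. -/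
def lyapAvg {X : Type*} [TopologicalSpace X] [MeasurableSpace X] {d : ℕ}
    (T : X → X) (A : GLC X d) (μ : ProbabilityMeasure X) (n : ℕ) : ℝ :=
  (n : ℝ)⁻¹ * ∫ x, Real.log ‖coc T A n x‖ ∂(μ : Measure X)

/-- `inf_{n ≥ 1} (1/n) ∫ log ‖A(n,x)‖ dμ`. -/
def lyapExp {X : Type*} [TopologicalSpace X] [MeasurableSpace X] {d : ℕ}
    (T : X → X) (A : GLC X d) (μ : ProbabilityMeasure X) : ℝ :=
  ⨅ n : {n : ℕ // 1 ≤ n}, lyapAvg T A μ n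

/-- `β^Λ(A)`, the maximum ergodic average over Λ. -/
def betaL {X : Type*} [TopologicalSpace X] [MeasurableSpace X] {d : ℕ}
    (T : X → X) (Λ : Set (ProbabilityMeasure X)) (A : GLC X d) : ℝ :=
  ⨆ μ : Λ, lyapExp T A μ

/-- `M^Λ_max(A)`, the set of maximizing measures over Λ. -/
def MmaxL {X : Type*} [TopologicalSpace X] [MeasurableSpace X] {d : ℕ}
    (T : X → X) (Λ : Set (ProbabilityMeasure X)) (A : GLC X d) :
    Set (ProbabilityMeasure X) :=
  {μ | μ ∈ Λ ∧ lyapExp T A μ = betaL T Λ A}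

/-- The set of T-invariant Borel probability measures `M(X,T)`. -/
def invM {X : Type*} [TopologicalSpace X] [MeasurableSpace X]
    (T : X → X) : Set (ProbabilityMeasure X) :=
  {μ | (μ : Measure X).map T = (μ : Measure X)}

set_option synthInstance.maxHeartbeats 1000000 in
/-- The scaled cocycle `x ↦ e^{g x} A(x)`. -/
def scale {X : Type*} [TopologicalSpace X] {d : ℕ} (g : C(X, ℝ)) (A : GLC X d) :
    GLC X d :=
  ⟨(⟨fun x => Real.exp (g x) • A.1.1 x, by fun_prop⟩,
    ⟨fun x => Real.exp (-(g x)) • A.1.2 x, by fun_prop⟩), by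
    intro x
    obtain ⟨h1, h2⟩ := A.2 x
    constructor <;>
      · dsimp only [ContinuousMap.coe_mk]
        ext v
        have hv1 := congrFun (congrArg DFunLike.coe h1) v
        have hv2 := congrFun (congrArg DFunLike.coe h2) v
        simp only [ContinuousLinearMap.mul_apply, ContinuousLinearMap.one_apply]
          at hv1 hv2 ⊢
        simp only [ContinuousLinearMap.smul_apply, _root_.map_smul, smul_smul]
        simp [hv1, hv2, ← mul_assoc, ← Real.exp_add]⟩

/-- The identity cocycle `x ↦ I_d`. -/
def idC (X : Type*) [TopologicalSpace X] (d : ℕ) : GLC X d :=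
  ⟨(ContinuousMap.const X 1, ContinuousMap.const X 1), fun _ => by simp⟩

/-- The set of Lyapunov-irregular points of A. -/
def LI {X : Type*} [TopologicalSpace X] {d : ℕ} (T : X → X) (A : GLC X d) : Set X :=
  {x | ¬ ∃ c : ℝ, Tendsto (fun n : ℕ => (n : ℝ)⁻¹ * Real.log ‖coc T A n x‖)
    atTop (𝓝 c)}



/-!
For fixed `n`, the average `(1/n) ∫ log ‖A(n,x)‖ dμ` is jointly continuous in `(A, μ)`: the
cocycle is a finite product of continuous maps, its norm stays away from `0` because its inverse
has norm at most `‖A⁻¹‖ⁿ`, and integrating a uniformly convergent family against weakly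
convergent probability measures converges. Along a subsequence with `μ_k → μ`, the inequalities
`β^Λ(A_k) ≤ (1/n) ∫ log ‖A_k(n,x)‖ dμ_k` therefore pass to the limit and give
`β^Λ(A) ≤ (1/n) ∫ log ‖A(n,x)‖ dμ` for every `n`. The reverse inequality holds because `μ`
lies in the closed set `Λ`.
-/

open scoped BoundedContinuousFunction

section ProbabilityMeasure

variable {X : Type*} [TopologicalSpace X] [MeasurableSpace X] [OpensMeasurableSpace X]

theorem continuous_integral_boundedContinuousFunction_prod :
    Continuous fun p : (X →ᵇ ℝ) × ProbabilityMeasure X => ∫ x, p.1 x ∂(p.2 : Measure X) := by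
  refine continuous_iff_continuousAt.2 fun ⟨f, ν⟩ => ?_
  have hsplit : ∀ p : (X →ᵇ ℝ) × ProbabilityMeasure X, ∫ x, p.1 x ∂(p.2 : Measure X) =
      ∫ x, (p.1 - f) x ∂(p.2 : Measure X) + ∫ x, f x ∂(p.2 : Measure X) := fun p => by
    rw [← integral_add ((p.1 - f).integrable _) (f.integrable _)]
    simp
  have hsmall : Tendsto (fun p : (X →ᵇ ℝ) × ProbabilityMeasure X =>
      ∫ x, (p.1 - f) x ∂(p.2 : Measure X)) (𝓝 (f, ν)) (𝓝 0) := by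
    refine squeeze_zero_norm (fun p => (p.1 - f).norm_integral_le_norm _) ?_
    exact tendsto_iff_norm_sub_tendsto_zero.1 (continuous_fst.tendsto (f, ν))
  have hfixed := ((ProbabilityMeasure.continuous_integral_boundedContinuousFunction f).comp
    continuous_snd).tendsto (f, ν)
  simpa [ContinuousAt, hsplit] using hsmall.add hfixed

end ProbabilityMeasure

section Cocycle

variable {X : Type*} [TopologicalSpace X] {d : ℕ} (T : X → X)

def invCoc (A : GLC X d) : ℕ → X → Md d
  | 0, _ => 1
  | n + 1, x => A.1.2 x * invCoc A n (T x)

theorem coc_mul_invCoc (A : GLC X d) (n : ℕ) (x : X) :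
    coc T A n x * invCoc T A n x = 1 := by
  induction n generalizing x with
  | zero => simp [coc, invCoc]
  | succ n ih =>
    simp only [coc, invCoc]
    rw [mul_assoc, ← mul_assoc (A.1.1 x), (A.2 x).1, one_mul, ih]

variable [CompactSpace X]

theorem norm_invCoc_le (A : GLC X d) (n : ℕ) (x : X) :
    ‖invCoc T A n x‖ ≤ ‖A.1.2‖ ^ n := by
  induction n generalizing x with
  | zero => exact ContinuousLinearMap.norm_id_le
  | succ n ih =>
    rw [pow_succ']
    exact (norm_mul_le _ _).trans
      (mul_le_mul (A.1.2.norm_coe_le_norm x) (ih _) (norm_nonneg _) (norm_nonneg A.1.2))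

/-- In dimension `0` both sides vanish, as `Real.log 0 = 0`. -/
theorem neg_mul_log_norm_le_log_norm_coc (A : GLC X d) (n : ℕ) (x : X) :
    -(n * Real.log ‖A.1.2‖) ≤ Real.log ‖coc T A n x‖ := by
  rcases subsingleton_or_nontrivial (Md d) with hd | hd
  · have hA : ‖A.1.2‖ = 0 := (norm_eq_zero (E := C(X, Md d))).2 (Subsingleton.elim _ _)
    simp [Subsingleton.elim (coc T A n x) 0, hA]
  have hone : 1 ≤ ‖coc T A n x‖ * ‖A.1.2‖ ^ n :=
    calc (1 : ℝ) = ‖coc T A n x * invCoc T A n x‖ := by rw [coc_mul_invCoc, norm_one]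
      _ ≤ ‖coc T A n x‖ * ‖A.1.2‖ ^ n :=
        (norm_mul_le _ _).trans
          (mul_le_mul_of_nonneg_left (norm_invCoc_le T A n x) (norm_nonneg _))
  have hne : ‖coc T A n x‖ * ‖A.1.2‖ ^ n ≠ 0 := by positivity
  have hlog := Real.log_nonneg hone
  rw [Real.log_mul (left_ne_zero_of_mul hne) (right_ne_zero_of_mul hne), Real.log_pow] at hlog
  linarith

variable {T}

theorem continuous_coc (hT : Continuous T) (n : ℕ) :
    Continuous fun p : GLC X d × X => coc T p.1 n p.2 := by
  induction n with
  | zero => exact continuous_const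
  | succ n ih =>
    have hA : Continuous fun p : GLC X d × X => p.1.1.1 p.2 :=
      continuous_eval.comp
        ((continuous_fst.comp (continuous_subtype_val.comp continuous_fst)).prodMk continuous_snd)
    exact (ih.comp (continuous_fst.prodMk (hT.comp continuous_snd))).mul hA

theorem continuous_log_norm_coc (hT : Continuous T) (n : ℕ) :
    Continuous fun p : GLC X d × X => Real.log ‖coc T p.1 n p.2‖ := by
  rcases subsingleton_or_nontrivial (Md d) with hd | hd
  · simp only [Subsingleton.elim _ (0 : Md d)]
    exact continuous_const
  refine (continuous_coc hT n).norm.log fun p => norm_ne_zero_iff.2 ?_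
  exact left_ne_zero_of_mul_eq_one (coc_mul_invCoc T p.1 n p.2)

variable [MeasurableSpace X] [OpensMeasurableSpace X]

theorem integrable_log_norm_coc (hT : Continuous T) (A : GLC X d) (n : ℕ) (ν : Measure X)
    [IsFiniteMeasure ν] : Integrable (fun x => Real.log ‖coc T A n x‖) ν :=
  (BoundedContinuousFunction.mkOfCompact
    ⟨_, (continuous_log_norm_coc hT n).comp (continuous_const.prodMk continuous_id)⟩).integrable ν

theorem continuous_lyapAvg (hT : Continuous T) (n : ℕ) :
    Continuous fun p : GLC X d × ProbabilityMeasure X => lyapAvg T p.1 p.2 n := by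
  let F : C(GLC X d × X, ℝ) := ⟨_, continuous_log_norm_coc hT n⟩
  have hF : Continuous fun B => BoundedContinuousFunction.mkOfCompact (F.curry B) :=
    (ContinuousMap.isometryEquivBoundedOfCompact X ℝ).continuous.comp F.curry.continuous
  exact continuous_const.mul (continuous_integral_boundedContinuousFunction_prod.comp
    ((hF.comp continuous_fst).prodMk continuous_snd))

theorem neg_log_norm_le_lyapAvg (hT : Continuous T) (A : GLC X d) (ν : ProbabilityMeasure X)
    {n : ℕ} (hn : 1 ≤ n) : -Real.log ‖A.1.2‖ ≤ lyapAvg T A ν n := by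
  have hint : -(n * Real.log ‖A.1.2‖) ≤ ∫ x, Real.log ‖coc T A n x‖ ∂(ν : Measure X) := by
    simpa using integral_mono (integrable_const (μ := (ν : Measure X)) _)
      (integrable_log_norm_coc hT A n _) (neg_mul_log_norm_le_log_norm_coc T A n)
  have hn0 : (0 : ℝ) < n := by exact_mod_cast hn
  rw [lyapAvg, le_inv_mul_iff₀ hn0]
  linarith

theorem lyapAvg_one_le_norm (hT : Continuous T) (A : GLC X d) (ν : ProbabilityMeasure X) :
    lyapAvg T A ν 1 ≤ ‖A.1.1‖ := by
  have hpt : ∀ x, Real.log ‖coc T A 1 x‖ ≤ ‖A.1.1‖ := fun x => by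
    simpa [coc] using (Real.log_le_self (norm_nonneg _)).trans (A.1.1.norm_coe_le_norm x)
  simpa [lyapAvg] using integral_mono (integrable_log_norm_coc hT A 1 _)
    (integrable_const (μ := (ν : Measure X)) _) hpt

theorem lyapExp_le_lyapAvg (hT : Continuous T) (A : GLC X d) (ν : ProbabilityMeasure X)
    {n : ℕ} (hn : 1 ≤ n) : lyapExp T A ν ≤ lyapAvg T A ν n :=
  ciInf_le (f := fun m : {m : ℕ // 1 ≤ m} => lyapAvg T A ν m)
    ⟨_, Set.forall_mem_range.2 fun m => neg_log_norm_le_lyapAvg hT A ν m.2⟩ ⟨n, hn⟩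

theorem lyapExp_le_betaL (hT : Continuous T) (A : GLC X d) {Λ : Set (ProbabilityMeasure X)}
    {ν : ProbabilityMeasure X} (hν : ν ∈ Λ) : lyapExp T A ν ≤ betaL T Λ A :=
  le_ciSup (f := fun ν : Λ => lyapExp T A ν)
    ⟨_, Set.forall_mem_range.2 fun ν =>
      (lyapExp_le_lyapAvg hT A ν le_rfl).trans (lyapAvg_one_le_norm hT A ν)⟩ ⟨ν, hν⟩

theorem betaL_le_lyapAvg_of_mem_MmaxL (hT : Continuous T) {A : GLC X d}
    {Λ : Set (ProbabilityMeasure X)} {ν : ProbabilityMeasure X} (hν : ν ∈ MmaxL T Λ A)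
    {n : ℕ} (hn : 1 ≤ n) : betaL T Λ A ≤ lyapAvg T A ν n :=
  hν.2 ▸ lyapExp_le_lyapAvg hT A ν hn

end Cocycle

section Perturbation

variable {X : Type*} [TopologicalSpace X] [CompactSpace X] {d : ℕ}

theorem dist_le_rho (A B : GLC X d) : dist A B ≤ rho A B := by
  have hbdd : BddAbove (Set.range fun x => ‖A.1.1 x - B.1.1 x‖ + ‖A.1.2 x - B.1.2 x‖) :=
    (isCompact_range (by fun_prop)).bddAbove
  have hle : ∀ x, ‖A.1.1 x - B.1.1 x‖ + ‖A.1.2 x - B.1.2 x‖ ≤ rho A B := le_ciSup hbdd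
  have h0 : 0 ≤ rho A B := Real.iSup_nonneg fun x => by positivity
  show dist A.1 B.1 ≤ _
  rw [Prod.dist_eq]
  refine max_le ((ContinuousMap.dist_le h0).2 fun x => ?_)
    ((ContinuousMap.dist_le h0).2 fun x => ?_)
  · rw [dist_eq_norm]; linarith [hle x, norm_nonneg (A.1.2 x - B.1.2 x)]
  · rw [dist_eq_norm]; linarith [hle x, norm_nonneg (A.1.1 x - B.1.1 x)]

theorem tendsto_of_tendsto_rho {ι : Type*} {l : Filter ι} {A : GLC X d} {Aseq : ι → GLC X d}
    (h : Tendsto (fun k => rho (Aseq k) A) l (𝓝 0)) : Tendsto Aseq l (𝓝 A) :=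
  tendsto_iff_dist_tendsto_zero.2
    (squeeze_zero (fun _ => dist_nonneg) (fun _ => dist_le_rho _ _) h)

end Perturbation

theorem stmt4_general {X : Type*} [MetricSpace X] [CompactSpace X] [MeasurableSpace X] [BorelSpace X]
    {d : ℕ} (T : X → X) (hT : Continuous T)
    (Λ : Set (MeasureTheory.ProbabilityMeasure X))
    (hcomp : IsCompact Λ)
    (A : GLC X d) (Aseq : ℕ → GLC X d)
    (hρ : Tendsto (fun k => rho (Aseq k) A) atTop (𝓝 0))
    (hβ : Tendsto (fun k => betaL T Λ (Aseq k)) atTop (𝓝 (betaL T Λ A)))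
    (μseq : ℕ → MeasureTheory.ProbabilityMeasure X)
    (hmax : ∀ k, μseq k ∈ MmaxL T Λ (Aseq k))
    (μ : MeasureTheory.ProbabilityMeasure X)
    (hclust : MapClusterPt μ atTop μseq) :
    μ ∈ MmaxL T Λ A := by
  obtain ⟨ψ, hψ, hμψ⟩ := hclust.tendsto_subseq
  have hμΛ : μ ∈ Λ :=
    hcomp.isClosed.mem_of_tendsto hμψ (Eventually.of_forall fun k => (hmax (ψ k)).1)
  refine ⟨hμΛ, le_antisymm (lyapExp_le_betaL hT A hμΛ) (le_ciInf fun ⟨n, hn⟩ => ?_)⟩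
  have hAψ : Tendsto (Aseq ∘ ψ) atTop (𝓝 A) :=
    (tendsto_of_tendsto_rho hρ).comp hψ.tendsto_atTop
  exact le_of_tendsto_of_tendsto' (hβ.comp hψ.tendsto_atTop)
    (((continuous_lyapAvg hT n).tendsto (A, μ)).comp (hAψ.prodMk_nhds hμψ))
    fun k => betaL_le_lyapAvg_of_mem_MmaxL hT (hmax (ψ k)) hn

/-- If `ρ(A_k, A) → 0`, `β^Λ(A_k) → β^Λ(A)`, `μ_k ∈ M^Λ_max(A_k)`, and `μ` is a
weak-* limit point of `(μ_k)`, then `μ ∈ M^Λ_max(A)`. -/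
theorem stmt4 {X : Type*} [MetricSpace X] [CompactSpace X] [MeasurableSpace X] [BorelSpace X]
    {d : ℕ} (T : X → X) (hT : Continuous T)
    (Λ : Set (MeasureTheory.ProbabilityMeasure X))
    (hne : Λ.Nonempty) (hcomp : IsCompact Λ) (hinv : Λ ⊆ invM T)
    (A : GLC X d) (Aseq : ℕ → GLC X d)
    (hρ : Tendsto (fun k => rho (Aseq k) A) atTop (𝓝 0))
    (hβ : Tendsto (fun k => betaL T Λ (Aseq k)) atTop (𝓝 (betaL T Λ A)))
    (μseq : ℕ → MeasureTheory.ProbabilityMeasure X)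
    (hmax : ∀ k, μseq k ∈ MmaxL T Λ (Aseq k))
    (μ : MeasureTheory.ProbabilityMeasure X)
    (hclust : MapClusterPt μ atTop μseq) :
    μ ∈ MmaxL T Λ A :=
  stmt4_general T hT Λ hcomp A Aseq hρ hβ μseq hmax μ hclust
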